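/- arXiv:2511.00680 — 9 statements merged into one kernel-verified Lean document; each statement's English description precedes it below -/
import Mathlib

section
/- Let f: ℝⁿ → ℝ be twice continuously differentiable with M-Lipschitz Hessian, and suppose d satisfies (∇²f(x) + μI)d = -∇f(x) for some μ ≥ 0. Then ‖∇f(x+d)‖ ≤ (M/2)‖d‖² + μ‖d‖. -/
open Set

/-
Split `∇f(x+d)` into the Taylor remainder `∇f(x+d) - ∇f(x) - ∇²f(x) d` and `∇f(x) + ∇²f(x) d`.
The Lipschitz Hessian bounds the remainder by `(M/2)‖d‖²`, and the regularized Newton equation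
turns the second term into `-μ d`.
-/

theorem ContDiff.contDiff_gradient {F : Type*} [NormedAddCommGroup F] [InnerProductSpace ℝ F]
    [CompleteSpace F] {f : F → ℝ} {m n : WithTop ℕ∞} (hf : ContDiff ℝ n f) (hmn : m + 1 ≤ n) :
    ContDiff ℝ m (gradient f) :=
  (InnerProductSpace.toDual ℝ F).symm.contDiff.comp (hf.fderiv_right hmn)

section TaylorRemainder

variable {E F : Type*} [NormedAddCommGroup E] [NormedSpace ℝ E]
  [NormedAddCommGroup F] [NormedSpace ℝ F]

theorem norm_fderiv_apply_sub_le_of_lipschitz {g : E → F} {M : ℝ}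
    (hLip : ∀ u v, ‖fderiv ℝ g u - fderiv ℝ g v‖ ≤ M * ‖u - v‖) (x d : E) {t : ℝ} (ht : 0 ≤ t) :
    ‖fderiv ℝ g (x + t • d) d - fderiv ℝ g x d‖ ≤ M * ‖d‖ ^ 2 * t :=
  calc ‖fderiv ℝ g (x + t • d) d - fderiv ℝ g x d‖
      = ‖(fderiv ℝ g (x + t • d) - fderiv ℝ g x) d‖ := rfl
    _ ≤ ‖fderiv ℝ g (x + t • d) - fderiv ℝ g x‖ * ‖d‖ := ContinuousLinearMap.le_opNorm _ _
    _ ≤ M * ‖x + t • d - x‖ * ‖d‖ := by gcongr; exact hLip _ _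
    _ = M * ‖d‖ ^ 2 * t := by
      rw [add_sub_cancel_left, norm_smul, Real.norm_of_nonneg ht]
      ring

/- Compare `t ↦ g (x + t • d) - g x - t • g' x d` on `[0, 1]` with the boundary function
`t ↦ (M/2)‖d‖² t²`, whose derivative dominates the norm of its derivative. -/
theorem norm_sub_sub_fderiv_le_of_lipschitz {g : E → F} {M : ℝ} (hg : Differentiable ℝ g)
    (hLip : ∀ u v, ‖fderiv ℝ g u - fderiv ℝ g v‖ ≤ M * ‖u - v‖) (x d : E) :
    ‖g (x + d) - g x - fderiv ℝ g x d‖ ≤ M / 2 * ‖d‖ ^ 2 := by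
  set φ : ℝ → F := fun t => g (x + t • d) - g x - t • fderiv ℝ g x d
  have hφ : ∀ t, HasDerivAt φ (fderiv ℝ g (x + t • d) d - fderiv ℝ g x d) t := by
    intro t
    have hline : HasDerivAt (fun s : ℝ => x + s • d) d t := by
      simpa using ((hasDerivAt_id t).smul_const d).const_add x
    exact (((hg _).hasFDerivAt.comp_hasDerivAt t hline).sub_const (g x)).sub
      (by simpa using (hasDerivAt_id t).smul_const (fderiv ℝ g x d))
  have hB : ∀ t, HasDerivAt (fun s : ℝ => M / 2 * ‖d‖ ^ 2 * s ^ 2) (M * ‖d‖ ^ 2 * t) t :=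
    fun t => ((hasDerivAt_pow 2 t).const_mul (M / 2 * ‖d‖ ^ 2)).congr_deriv (by push_cast; ring)
  have hbound := image_norm_le_of_norm_deriv_right_le_deriv_boundary (a := 0) (b := 1)
    (f := φ) (fun t _ => (hφ t).continuousAt.continuousWithinAt)
    (fun t _ => (hφ t).hasDerivWithinAt) (by simp [φ]) hB
    (fun t ht => norm_fderiv_apply_sub_le_of_lipschitz hLip x d ht.1)
    (right_mem_Icc.2 zero_le_one)
  simpa [φ] using hbound

end TaylorRemainder

theorem stmt0_general {n : ℕ} (f : EuclideanSpace ℝ (Fin n) → ℝ) (M μ : ℝ)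
    (x d : EuclideanSpace ℝ (Fin n))
    (hf : ContDiff ℝ 2 f)
    (hLip : ∀ u v : EuclideanSpace ℝ (Fin n),
      ‖fderiv ℝ (gradient f) u - fderiv ℝ (gradient f) v‖ ≤ M * ‖u - v‖)
    (hμ : 0 ≤ μ)
    (heq : (fderiv ℝ (gradient f) x) d + μ • d = - gradient f x) :
    ‖gradient f (x + d)‖ ≤ M / 2 * ‖d‖ ^ 2 + μ * ‖d‖ := by
  set g := gradient f
  have hg : Differentiable ℝ g :=
    (hf.contDiff_gradient (m := 1) (by norm_num)).differentiable one_ne_zero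
  have hnewton : fderiv ℝ g x d + g x = -(μ • d) := by
    rw [eq_neg_iff_add_eq_zero, add_right_comm, heq, neg_add_cancel]
  calc ‖g (x + d)‖ = ‖(g (x + d) - g x - fderiv ℝ g x d) + (fderiv ℝ g x d + g x)‖ := by
        congr 1; abel
    _ ≤ ‖g (x + d) - g x - fderiv ℝ g x d‖ + ‖-(μ • d)‖ := hnewton ▸ norm_add_le _ _
    _ ≤ M / 2 * ‖d‖ ^ 2 + μ * ‖d‖ := by
        rw [norm_neg, norm_smul, Real.norm_of_nonneg hμ]
        gcongr
        exact norm_sub_sub_fderiv_le_of_lipschitz hg hLip x d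

/-- If `f` is twice continuously differentiable with `M`-Lipschitz Hessian and
`(∇²f(x) + μI) d = -∇f(x)` with `μ ≥ 0`, then `‖∇f(x+d)‖ ≤ (M/2)‖d‖² + μ‖d‖`. -/
theorem stmt0 {n : ℕ} (f : EuclideanSpace ℝ (Fin n) → ℝ) (M μ : ℝ)
    (x d : EuclideanSpace ℝ (Fin n))
    (hf : ContDiff ℝ 2 f) (hM : 0 < M)
    (hLip : ∀ u v : EuclideanSpace ℝ (Fin n),
      ‖fderiv ℝ (gradient f) u - fderiv ℝ (gradient f) v‖ ≤ M * ‖u - v‖)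
    (hμ : 0 ≤ μ)
    (heq : (fderiv ℝ (gradient f) x) d + μ • d = - gradient f x) :
    ‖gradient f (x + d)‖ ≤ M / 2 * ‖d‖ ^ 2 + μ * ‖d‖ :=
  stmt0_general f M μ x d hf hLip hμ heq
end

section
/- Let f: ℝⁿ → ℝ be twice continuously differentiable with M-Lipschitz Hessian, and suppose (∇²f(x)+μI)d = -∇f(x) with μ ≥ M‖d‖. Then ⟨∇f(x+d), −d⟩ ≥ ‖∇f(x+d)‖²/(2μ) + (3/8)μ‖d‖². -/
open Real InnerProductSpace Set
open scoped RealInnerProductSpace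

/-!
Write `g = ∇f(x+d)`. Since `∇²f(x) d = -∇f(x) - μ d`, the residual `g + μ d` is the second-order
Taylor remainder of `∇f` at `x` in direction `d`, so the Lipschitz Hessian bounds it by
`(M/2)‖d‖² ≤ (μ/2)‖d‖`. Expanding `‖g + μ d‖²` gives the identity
`2μ ⟪g, -d⟫ = ‖g‖² + μ²‖d‖² - ‖g + μ d‖²`, and the bound turns it into
`2μ ⟪g, -d⟫ ≥ ‖g‖² + (3/4) μ²‖d‖²`.
-/

theorem ContDiff.gradient {F : Type*} [NormedAddCommGroup F] [InnerProductSpace ℝ F]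
    [CompleteSpace F] {f : F → ℝ} {n : WithTop ℕ∞} (hf : ContDiff ℝ (n + 1) f) :
    ContDiff ℝ n (gradient f) :=
  (toDual ℝ F).symm.contDiff.comp (hf.fderiv_right le_rfl)

theorem norm_sub_sub_fderiv_le_of_lipschitz_fderiv {E F : Type*} [NormedAddCommGroup E]
    [NormedSpace ℝ E] [NormedAddCommGroup F] [NormedSpace ℝ F] {G : E → F} {M : ℝ} {x : E}
    (hG : Differentiable ℝ G) (hLip : ∀ y, ‖fderiv ℝ G y - fderiv ℝ G x‖ ≤ M * ‖y - x‖)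
    (d : E) : ‖G (x + d) - G x - fderiv ℝ G x d‖ ≤ M / 2 * ‖d‖ ^ 2 := by
  set φ : ℝ → F := fun t => G (x + t • d) - G x - t • fderiv ℝ G x d
  have hφ : ∀ t : ℝ, HasDerivAt φ (fderiv ℝ G (x + t • d) d - fderiv ℝ G x d) t := by
    intro t
    have hline : HasDerivAt (fun t : ℝ => x + t • d) d t := by
      simpa using ((hasDerivAt_id t).smul_const d).const_add x
    exact (((hG _).hasFDerivAt.comp_hasDerivAt t hline).sub_const (G x)).sub
      (by simpa using (hasDerivAt_id t).smul_const (fderiv ℝ G x d))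
  have hB : ∀ t : ℝ, HasDerivAt (fun t : ℝ => M / 2 * ‖d‖ ^ 2 * t ^ 2) (M * ‖d‖ ^ 2 * t) t := by
    intro t
    exact ((hasDerivAt_pow 2 t).const_mul (M / 2 * ‖d‖ ^ 2)).congr_deriv (by norm_num; ring)
  have hφ'_le : ∀ t ∈ Ico (0 : ℝ) 1,
      ‖fderiv ℝ G (x + t • d) d - fderiv ℝ G x d‖ ≤ M * ‖d‖ ^ 2 * t := by
    intro t ht
    calc ‖fderiv ℝ G (x + t • d) d - fderiv ℝ G x d‖
        = ‖(fderiv ℝ G (x + t • d) - fderiv ℝ G x) d‖ := rfl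
      _ ≤ ‖fderiv ℝ G (x + t • d) - fderiv ℝ G x‖ * ‖d‖ := ContinuousLinearMap.le_opNorm _ _
      _ ≤ M * ‖x + t • d - x‖ * ‖d‖ := by gcongr; exact hLip _
      _ = M * ‖d‖ ^ 2 * t := by
        rw [add_sub_cancel_left, norm_smul, norm_of_nonneg ht.1]
        ring
  simpa [φ] using image_norm_le_of_norm_deriv_right_le_deriv_boundary
    (fun t _ => (hφ t).continuousAt.continuousWithinAt) (fun t _ => (hφ t).hasDerivWithinAt)
    (by simp [φ]) hB hφ'_le (right_mem_Icc.2 zero_le_one)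

theorem inner_neg_ge_of_norm_add_smul_le {E : Type*} [NormedAddCommGroup E]
    [InnerProductSpace ℝ E] {g d : E} {μ : ℝ} (h : ‖g + μ • d‖ ≤ μ / 2 * ‖d‖) :
    ⟪g, -d⟫ ≥ ‖g‖ ^ 2 / (2 * μ) + 3 / 8 * μ * ‖d‖ ^ 2 := by
  rcases le_or_gt μ 0 with hμ | hμ
  · have hres : g + μ • d = 0 := norm_le_zero_iff.1 (h.trans (by nlinarith [norm_nonneg d]))
    have hμd : μ • d = 0 := by
      rw [← norm_eq_zero, norm_smul, norm_of_nonpos hμ]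
      nlinarith [norm_nonneg (g + μ • d), norm_nonneg d]
    obtain rfl : g = 0 := by simpa [hμd] using hres
    have : 3 / 8 * μ * ‖d‖ ^ 2 ≤ 0 := by nlinarith [sq_nonneg ‖d‖]
    simpa using this
  · have hexpand : ‖g + μ • d‖ ^ 2 = ‖g‖ ^ 2 + 2 * μ * ⟪g, d⟫ + μ ^ 2 * ‖d‖ ^ 2 := by
      rw [norm_add_sq_real, real_inner_smul_right, norm_smul, mul_pow, norm_eq_abs, sq_abs]
      ring
    have hsq : ‖g + μ • d‖ ^ 2 ≤ (μ / 2 * ‖d‖) ^ 2 := pow_le_pow_left₀ (norm_nonneg _) h 2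
    rw [inner_neg_right, ge_iff_le, div_add' _ _ _ (by positivity), div_le_iff₀ (by positivity)]
    nlinarith

theorem stmt1_general {n : ℕ} (f : EuclideanSpace ℝ (Fin n) → ℝ) (M μ : ℝ)
    (x d : EuclideanSpace ℝ (Fin n))
    (hf : ContDiff ℝ 2 f)
    (hLip : ∀ u v : EuclideanSpace ℝ (Fin n),
      ‖fderiv ℝ (gradient f) u - fderiv ℝ (gradient f) v‖ ≤ M * ‖u - v‖)
    (hμ : M * ‖d‖ ≤ μ)
    (heq : (fderiv ℝ (gradient f) x) d + μ • d = - gradient f x) :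
    ⟪gradient f (x + d), -d⟫ ≥ ‖gradient f (x + d)‖ ^ 2 / (2 * μ) + 3 / 8 * μ * ‖d‖ ^ 2 := by
  have hG : Differentiable ℝ (gradient f) :=
    (ContDiff.gradient (n := 1) hf).differentiable one_ne_zero
  have hres : gradient f (x + d) - gradient f x - fderiv ℝ (gradient f) x d
      = gradient f (x + d) + μ • d := by
    rw [eq_sub_of_add_eq heq]
    abel
  have htaylor := norm_sub_sub_fderiv_le_of_lipschitz_fderiv hG (fun y => hLip y x) d
  rw [hres] at htaylor
  refine inner_neg_ge_of_norm_add_smul_le (htaylor.trans ?_)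
  nlinarith [norm_nonneg d]

/-- If `f` is twice continuously differentiable with `M`-Lipschitz Hessian and
`(∇²f(x) + μI) d = -∇f(x)` with `μ ≥ M‖d‖`, then
`⟨∇f(x+d), -d⟩ ≥ ‖∇f(x+d)‖²/(2μ) + (3/8)μ‖d‖²`. -/
theorem stmt1 {n : ℕ} (f : EuclideanSpace ℝ (Fin n) → ℝ) (M μ : ℝ)
    (x d : EuclideanSpace ℝ (Fin n))
    (hf : ContDiff ℝ 2 f) (hM : 0 < M)
    (hLip : ∀ u v : EuclideanSpace ℝ (Fin n),
      ‖fderiv ℝ (gradient f) u - fderiv ℝ (gradient f) v‖ ≤ M * ‖u - v‖)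
    (hμ : M * ‖d‖ ≤ μ)
    (heq : (fderiv ℝ (gradient f) x) d + μ • d = - gradient f x) :
    ⟪gradient f (x + d), -d⟫ ≥ ‖gradient f (x + d)‖ ^ 2 / (2 * μ) + 3 / 8 * μ * ‖d‖ ^ 2 :=
  stmt1_general f M μ x d hf hLip hμ heq
end

section
/- Let f: ℝⁿ → ℝ be twice continuously differentiable, convex, with ‖∇²f(x)‖ ≤ κ_H for all x. Suppose at a point y the vector d satisfies (∇²f(y) + (√(2M)/2)‖∇f(y)‖^{1/2} I)d = -∇f(y) and ‖d‖ ≤ ‖∇f(y)‖^{1/2}/√(2M). Then ‖∇f(y)‖ ≤ 2κ_H²/M. -/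
open Real

/-- If `f` is convex, twice continuously differentiable with `‖∇²f‖ ≤ κ_H`, and at `y`
the vector `d` satisfies `(∇²f(y) + (√(2M)/2)‖∇f(y)‖^{1/2} I) d = -∇f(y)` with
`‖d‖ ≤ ‖∇f(y)‖^{1/2}/√(2M)`, then `‖∇f(y)‖ ≤ 2κ_H²/M`. -/
theorem stmt5 {n : ℕ} (f : EuclideanSpace ℝ (Fin n) → ℝ) (M κ : ℝ)
    (y d : EuclideanSpace ℝ (Fin n))
    (hf : ContDiff ℝ 2 f) (hconv : ConvexOn ℝ Set.univ f) (hM : 0 < M) (hκ : 0 < κ)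
    (hbdd : ∀ x : EuclideanSpace ℝ (Fin n), ‖fderiv ℝ (gradient f) x‖ ≤ κ)
    (heq : (fderiv ℝ (gradient f) y) d
        + (Real.sqrt (2 * M) / 2 * Real.sqrt ‖gradient f y‖) • d = - gradient f y)
    (hd : ‖d‖ ≤ Real.sqrt ‖gradient f y‖ / Real.sqrt (2 * M)) :
    ‖gradient f y‖ ≤ 2 * κ ^ 2 / M := by
  set g := gradient f y with hg
  set t := Real.sqrt ‖g‖ with ht
  have h2M : (0:ℝ) < Real.sqrt (2 * M) := Real.sqrt_pos.mpr (by linarith)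
  have ht0 : 0 ≤ t := Real.sqrt_nonneg _
  have htg : t ^ 2 = ‖g‖ := Real.sq_sqrt (norm_nonneg _)
  have hsq : Real.sqrt (2 * M) ^ 2 = 2 * M := Real.sq_sqrt (by linarith)
  have hd0 : 0 ≤ ‖d‖ := norm_nonneg _
  -- bound on ‖g‖
  have hgle : ‖g‖ ≤ κ * ‖d‖ + (Real.sqrt (2 * M) / 2 * t) * ‖d‖ := by
    calc ‖g‖ = ‖(fderiv ℝ (gradient f) y) d + (Real.sqrt (2 * M) / 2 * t) • d‖ := by
            rw [heq, norm_neg]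
      _ ≤ ‖(fderiv ℝ (gradient f) y) d‖ + ‖(Real.sqrt (2 * M) / 2 * t) • d‖ :=
            norm_add_le _ _
      _ ≤ κ * ‖d‖ + (Real.sqrt (2 * M) / 2 * t) * ‖d‖ := by
            gcongr
            · exact le_trans ((fderiv ℝ (gradient f) y).le_opNorm d)
                (mul_le_mul_of_nonneg_right (hbdd y) hd0)
            · rw [norm_smul, Real.norm_eq_abs, abs_of_nonneg (by positivity)]
  have hterm2 : (Real.sqrt (2 * M) / 2 * t) * ‖d‖ ≤ ‖g‖ / 2 := by
    have : (Real.sqrt (2 * M) / 2 * t) * ‖d‖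
        ≤ (Real.sqrt (2 * M) / 2 * t) * (t / Real.sqrt (2 * M)) := by
      apply mul_le_mul_of_nonneg_left hd (by positivity)
    refine this.trans ?_
    have heq2 : (Real.sqrt (2 * M) / 2 * t) * (t / Real.sqrt (2 * M)) = t ^ 2 / 2 := by
      field_simp
    rw [heq2, htg]
  have key : ‖g‖ ≤ 2 * (κ * (t / Real.sqrt (2 * M))) := by
    have h1 : κ * ‖d‖ ≤ κ * (t / Real.sqrt (2 * M)) :=
      mul_le_mul_of_nonneg_left hd hκ.le
    linarith
  -- case t = 0 or t > 0
  rcases eq_or_lt_of_le ht0 with h0 | hpos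
  · have : ‖g‖ = 0 := by rw [← htg, ← h0]; ring
    rw [this]; positivity
  · -- t² ≤ 2κ t/√(2M) ⇒ t ≤ 2κ/√(2M)
    have hle : t ≤ 2 * κ / Real.sqrt (2 * M) := by
      rw [← htg] at key
      rw [le_div_iff₀ h2M]
      have hk : t * (t * Real.sqrt (2 * M)) ≤ t * (2 * κ) := by
        have h3 := mul_le_mul_of_nonneg_right key h2M.le
        have h4 : 2 * (κ * (t / Real.sqrt (2 * M))) * Real.sqrt (2 * M)
            = t * (2 * κ) := by field_simp
        nlinarith
      exact le_of_mul_le_mul_left hk hpos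
    have : t ^ 2 ≤ (2 * κ / Real.sqrt (2 * M)) ^ 2 := by
      apply sq_le_sq' (by linarith) hle
    rw [htg] at this
    refine this.trans_eq ?_
    rw [div_pow, hsq]
    ring
end

section
/- Let H be an n×n positive semidefinite symmetric matrix and g ∈ ℝⁿ a nonzero vector. Define g_y(μ) = μ / ‖(H + μI)^{-1}g‖ for μ > 0. Then g_y is continuously differentiable and strictly increasing on (0,∞), and its derivative satisfies 0 < g_y'(μ) ≤ 2/‖(H + μI)^{-1}g‖. -/
/-!
Write `x(μ) = (H + μI)⁻¹ g`. Differentiating `(H + μI) x = g` gives `x' = -(H + μI)⁻¹ x`, so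
`d/dμ (μ / ‖x‖) = (‖x‖² + μ ⟪x, (H + μI)⁻¹ x⟫) / ‖x‖³`. For `H ⪰ 0` and `μ > 0`,
`0 ≤ μ ⟪x, (H + μI)⁻¹ x⟫ ≤ ‖x‖²` (put `x = (H + μI) y` and expand), which yields
`0 < g_y' ≤ 2 / ‖x‖`. Smoothness is inherited from that of matrix inversion.
-/

open Matrix Set
open scoped RealInnerProductSpace

section DivNorm

variable {E : Type*} [NormedAddCommGroup E] [InnerProductSpace ℝ E] {x : ℝ → E} {x' : E} {μ : ℝ}

theorem HasDerivAt.norm (hx : HasDerivAt x x' μ) (h0 : x μ ≠ 0) :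
    HasDerivAt (‖x ·‖) (⟪x μ, x'⟫ / ‖x μ‖) μ := by
  have h := hx.norm_sq.sqrt (by positivity)
  simp only [Real.sqrt_sq (norm_nonneg _)] at h
  exact h.congr_deriv (by field_simp)

theorem HasDerivAt.id_div_norm (hx : HasDerivAt x x' μ) (h0 : x μ ≠ 0) :
    HasDerivAt (fun t => t / ‖x t‖) ((‖x μ‖ ^ 2 - μ * ⟪x μ, x'⟫) / ‖x μ‖ ^ 3) μ := by
  have hx0 : ‖x μ‖ ≠ 0 := norm_ne_zero_iff.mpr h0
  refine ((hasDerivAt_id' μ).fun_div (hx.norm h0) hx0).congr_deriv ?_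
  field_simp

end DivNorm

theorem HasDerivAt.ringInverse {𝕜 R : Type*} [NontriviallyNormedField 𝕜] [NormedRing R]
    [NormedAlgebra 𝕜 R] [CompleteSpace R] {f : 𝕜 → R} {f' : R} {t : 𝕜}
    (hf : HasDerivAt f f' t) (ht : IsUnit (f t)) :
    HasDerivAt (fun s => Ring.inverse (f s))
      (-(Ring.inverse (f t) * f' * Ring.inverse (f t))) t := by
  obtain ⟨u, hu⟩ := ht
  have h := (hasFDerivAt_ringInverse (𝕜 := 𝕜) u).comp_hasDerivAt_of_eq t hf hu
  rw [← hu]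
  simpa [Function.comp_def] using h

namespace Matrix

theorem PosSemidef.posDef_add_smul_one {ι : Type*} [DecidableEq ι] {H : Matrix ι ι ℝ} {μ : ℝ}
    (hH : H.PosSemidef) (hμ : 0 < μ) : (H + μ • 1).PosDef :=
  PosDef.posSemidef_add hH (PosDef.one.smul hμ)

variable {ι : Type*} [Fintype ι]

theorem PosSemidef.mul_dotProduct_add_smul_one_mulVec_le [DecidableEq ι] {H : Matrix ι ι ℝ}
    {μ : ℝ} (hH : H.PosSemidef) (hμ : 0 ≤ μ) (y : ι → ℝ) :
    μ * (y ⬝ᵥ ((H + μ • 1) *ᵥ y)) ≤ ((H + μ • 1) *ᵥ y) ⬝ᵥ ((H + μ • 1) *ᵥ y) := by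
  have hyHy : 0 ≤ y ⬝ᵥ (H *ᵥ y) := by simpa using hH.dotProduct_mulVec_nonneg y
  have hHyHy : 0 ≤ (H *ᵥ y) ⬝ᵥ (H *ᵥ y) := Finset.sum_nonneg fun i _ => mul_self_nonneg _
  simp only [add_mulVec, smul_mulVec, one_mulVec, dotProduct_add, add_dotProduct,
    smul_dotProduct, dotProduct_smul, smul_eq_mul, dotProduct_comm (H *ᵥ y) y]
  nlinarith

-- Any norm would do: it only serves to differentiate matrix inversion in a normed algebra.
attribute [local instance] Matrix.linftyOpNormedRing Matrix.linftyOpNormedAlgebra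

noncomputable def mulVecEuclideanCLM (g : ι → ℝ) : Matrix ι ι ℝ →L[ℝ] EuclideanSpace ℝ ι :=
  LinearMap.toContinuousLinearMap
    { toFun M := WithLp.toLp 2 (M *ᵥ g)
      map_add' M N := by simp [add_mulVec]
      map_smul' c M := by simp [smul_mulVec] }

end Matrix

noncomputable def shiftedSolution {ι : Type*} [Fintype ι] [DecidableEq ι] (H : Matrix ι ι ℝ)
    (g : ι → ℝ) (μ : ℝ) : EuclideanSpace ℝ ι :=
  WithLp.toLp 2 ((H + μ • 1)⁻¹ *ᵥ g)

section ShiftedSolution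

variable {ι : Type*} [Fintype ι] [DecidableEq ι] {H : Matrix ι ι ℝ} {g : ι → ℝ} {μ : ℝ}

theorem shiftedSolution_ne_zero (h : IsUnit (H + μ • 1)) (hg : g ≠ 0) :
    shiftedSolution H g μ ≠ 0 := by
  intro h0
  have hsol : (H + μ • 1)⁻¹ *ᵥ g = 0 := by simpa [shiftedSolution] using h0
  apply hg
  rw [← one_mulVec g, ← mul_nonsing_inv _ ((isUnit_iff_isUnit_det _).mp h), ← mulVec_mulVec,
    hsol, mulVec_zero]

theorem inner_shiftedSolution_nonneg (hH : H.PosSemidef) (hμ : 0 < μ) (v : ι → ℝ) :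
    0 ≤ ⟪WithLp.toLp 2 v, shiftedSolution H v μ⟫ := by
  simpa [shiftedSolution, EuclideanSpace.inner_toLp_toLp, dotProduct_comm] using
    (hH.posDef_add_smul_one hμ).inv.posSemidef.dotProduct_mulVec_nonneg v

theorem mul_inner_shiftedSolution_le (hH : H.PosSemidef) (hμ : 0 < μ) (v : ι → ℝ) :
    μ * ⟪WithLp.toLp 2 v, shiftedSolution H v μ⟫ ≤ ‖WithLp.toLp 2 v‖ ^ 2 := by
  have hdet := (isUnit_iff_isUnit_det _).mp (hH.posDef_add_smul_one hμ).isUnit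
  obtain ⟨y, rfl⟩ : ∃ y, v = (H + μ • 1) *ᵥ y :=
    ⟨(H + μ • 1)⁻¹ *ᵥ v, by rw [mulVec_mulVec, mul_nonsing_inv _ hdet, one_mulVec]⟩
  have hy : (H + μ • 1)⁻¹ *ᵥ ((H + μ • 1) *ᵥ y) = y := by
    rw [mulVec_mulVec, nonsing_inv_mul _ hdet, one_mulVec]
  rw [← real_inner_self_eq_norm_sq, shiftedSolution, hy]
  simpa only [EuclideanSpace.inner_toLp_toLp, star_trivial] using
    hH.mul_dotProduct_add_smul_one_mulVec_le hμ.le y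

section Calculus

attribute [local instance] Matrix.linftyOpNormedRing Matrix.linftyOpNormedAlgebra

theorem shiftedSolution_eq_mulVecEuclideanCLM_ringInverse (H : Matrix ι ι ℝ) (g : ι → ℝ) :
    shiftedSolution H g = fun t => mulVecEuclideanCLM g (Ring.inverse (H + t • 1)) := by
  ext t : 1
  rw [shiftedSolution, nonsing_inv_eq_ringInverse]
  rfl

theorem hasDerivAt_shiftedSolution (h : IsUnit (H + μ • 1)) :
    HasDerivAt (shiftedSolution H g) (-shiftedSolution H ((H + μ • 1)⁻¹ *ᵥ g) μ) μ := by
  have hA : HasDerivAt (fun t : ℝ => H + t • (1 : Matrix ι ι ℝ)) 1 μ :=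
    (((hasDerivAt_id' μ).smul_const (1 : Matrix ι ι ℝ)).const_add H).congr_deriv (one_smul _ _)
  rw [shiftedSolution_eq_mulVecEuclideanCLM_ringInverse]
  refine ((mulVecEuclideanCLM g).hasFDerivAt.comp_hasDerivAt μ (hA.ringInverse h)).congr_deriv ?_
  show WithLp.toLp 2 (_ *ᵥ g) = _
  simp [shiftedSolution, nonsing_inv_eq_ringInverse, neg_mulVec, mulVec_mulVec]

theorem contDiffAt_shiftedSolution {n : WithTop ℕ∞} (h : IsUnit (H + μ • 1)) :
    ContDiffAt ℝ n (shiftedSolution H g) μ := by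
  rw [shiftedSolution_eq_mulVecEuclideanCLM_ringInverse]
  obtain ⟨u, hu⟩ := h
  have hA : ContDiff ℝ n (fun t : ℝ => H + t • (1 : Matrix ι ι ℝ)) := by fun_prop
  have hinv : ContDiffAt ℝ n Ring.inverse (H + μ • 1) := hu ▸ contDiffAt_ringInverse ℝ u
  exact (mulVecEuclideanCLM g).contDiff.comp_contDiffAt μ
    (hinv.comp (g := Ring.inverse) μ hA.contDiffAt)

end Calculus

theorem contDiffOn_div_norm_shiftedSolution {n : WithTop ℕ∞} (hH : H.PosSemidef) (hg : g ≠ 0) :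
    ContDiffOn ℝ n (fun t => t / ‖shiftedSolution H g t‖) (Ioi 0) := by
  intro μ hμ
  have h := (hH.posDef_add_smul_one hμ).isUnit
  exact (contDiffAt_id.div ((contDiffAt_shiftedSolution h).norm ℝ (shiftedSolution_ne_zero h hg))
    (norm_ne_zero_iff.mpr (shiftedSolution_ne_zero h hg))).contDiffWithinAt

theorem deriv_div_norm_shiftedSolution_mem_Ioc (hH : H.PosSemidef) (hg : g ≠ 0) (hμ : 0 < μ) :
    deriv (fun t => t / ‖shiftedSolution H g t‖) μ ∈ Ioc 0 (2 / ‖shiftedSolution H g μ‖) := by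
  have h := (hH.posDef_add_smul_one hμ).isUnit
  have hx0 := shiftedSolution_ne_zero h hg
  rw [((hasDerivAt_shiftedSolution h).id_div_norm hx0).deriv, inner_neg_right, mul_neg,
    sub_neg_eq_add]
  have hq₀ := inner_shiftedSolution_nonneg hH hμ ((H + μ • 1)⁻¹ *ᵥ g)
  have hq₁ := mul_inner_shiftedSolution_le hH hμ ((H + μ • 1)⁻¹ *ᵥ g)
  have hx : 0 < ‖shiftedSolution H g μ‖ := norm_pos_iff.mpr hx0
  change 0 ≤ ⟪shiftedSolution H g μ, _⟫ at hq₀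
  change μ * ⟪shiftedSolution H g μ, _⟫ ≤ ‖shiftedSolution H g μ‖ ^ 2 at hq₁
  constructor
  · positivity
  · rw [div_le_div_iff₀ (by positivity) hx]
    nlinarith

end ShiftedSolution

/-- For `H ⪰ 0` symmetric and `g ≠ 0`, the function `g_y(μ) = μ/‖(H+μI)⁻¹g‖` is
continuously differentiable and strictly increasing on `(0,∞)`, with
`0 < g_y'(μ) ≤ 2/‖(H+μI)⁻¹g‖`. -/
theorem stmt7 {n : ℕ} (H : Matrix (Fin n) (Fin n) ℝ) (g : Fin n → ℝ)
    (hH : H.PosSemidef) (hg : g ≠ 0) :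
    StrictMonoOn
        (fun μ : ℝ => μ / ‖(WithLp.equiv 2 (Fin n → ℝ)).symm ((H + μ • 1)⁻¹.mulVec g)‖)
        (Set.Ioi 0) ∧
    ContinuousOn
        (deriv fun μ : ℝ =>
          μ / ‖(WithLp.equiv 2 (Fin n → ℝ)).symm ((H + μ • 1)⁻¹.mulVec g)‖)
        (Set.Ioi 0) ∧
    ∀ μ : ℝ, μ ∈ Set.Ioi (0 : ℝ) →
      HasDerivAt
          (fun μ : ℝ =>
            μ / ‖(WithLp.equiv 2 (Fin n → ℝ)).symm ((H + μ • 1)⁻¹.mulVec g)‖)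
          (deriv (fun μ : ℝ =>
            μ / ‖(WithLp.equiv 2 (Fin n → ℝ)).symm ((H + μ • 1)⁻¹.mulVec g)‖) μ) μ ∧
        0 < deriv (fun μ : ℝ =>
            μ / ‖(WithLp.equiv 2 (Fin n → ℝ)).symm ((H + μ • 1)⁻¹.mulVec g)‖) μ ∧
        deriv (fun μ : ℝ =>
            μ / ‖(WithLp.equiv 2 (Fin n → ℝ)).symm ((H + μ • 1)⁻¹.mulVec g)‖) μ ≤
          2 / ‖(WithLp.equiv 2 (Fin n → ℝ)).symm ((H + μ • 1)⁻¹.mulVec g)‖ := by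
  change StrictMonoOn (fun t => t / ‖shiftedSolution H g t‖) (Ioi 0) ∧
    ContinuousOn (deriv fun t => t / ‖shiftedSolution H g t‖) (Ioi 0) ∧
    ∀ μ ∈ Ioi (0 : ℝ), HasDerivAt (fun t => t / ‖shiftedSolution H g t‖)
        (deriv (fun t => t / ‖shiftedSolution H g t‖) μ) μ ∧
      deriv (fun t => t / ‖shiftedSolution H g t‖) μ ∈ Ioc 0 (2 / ‖shiftedSolution H g μ‖)
  have hF : ContDiffOn ℝ 1 (fun t => t / ‖shiftedSolution H g t‖) (Ioi 0) :=
    contDiffOn_div_norm_shiftedSolution hH hg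
  refine ⟨strictMonoOn_of_deriv_pos (convex_Ioi 0) hF.continuousOn fun μ hμ => ?_,
    hF.continuousOn_deriv_of_isOpen isOpen_Ioi le_rfl, fun μ hμ => ⟨?_, ?_⟩⟩
  · rw [interior_Ioi] at hμ
    exact (deriv_div_norm_shiftedSolution_mem_Ioc hH hg hμ).1
  · exact ((hF.contDiffAt (Ioi_mem_nhds hμ)).differentiableAt one_ne_zero).hasDerivAt
  · exact deriv_div_norm_shiftedSolution_mem_Ioc hH hg hμ
end

section
/- Let H ⪰ 0 be symmetric, g ≠ 0, and let g_y(μ) = μ/‖(H+μI)^{-1}g‖ for μ > 0. Suppose μ_l < μ_u satisfy g_y(μ_l) = M and g_y(μ_u) = 2M for some M > 0. Then μ_u − μ_l ≥ (M/2)·‖(H + μ_u I)^{-1} g‖. -/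
/-!
The map `μ ↦ μ ‖(H + μI)⁻¹ g‖` is nondecreasing on `(0, ∞)`: for `μ ≤ ν` put
`v = (H + μI)⁻¹ g` and `w = (H + νI)⁻¹ g`; then `(H + μI)(v - w) = (ν - μ) w`, and
`‖(H + μI) x‖ ≥ μ ‖x‖` because `H ⪰ 0`, so `μ ‖v‖ ≤ μ ‖w‖ + (ν - μ) ‖w‖ = ν ‖w‖`.
With `a = ‖v‖`, `b = ‖w‖` at `μ_l`, `μ_u`, the hypotheses read `μ_l = M a` and
`μ_u = 2 M b`, so monotonicity gives `a² ≤ 2 b²`, hence `a ≤ 3b/2` and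
`μ_u - μ_l = M (2b - a) ≥ M b / 2`.
-/

namespace Matrix.PosSemidef

variable {ι : Type*} [DecidableEq ι] {H : Matrix ι ι ℝ}

theorem posDef_add_smul_one_s8 (hH : H.PosSemidef) {μ : ℝ} (hμ : 0 < μ) : (H + μ • 1).PosDef :=
  PosDef.posSemidef_add hH (PosDef.one.smul hμ)

variable [Fintype ι]

theorem add_smul_one_mulVec_inv_mulVec (hH : H.PosSemidef) {μ : ℝ} (hμ : 0 < μ) (g : ι → ℝ) :
    (H + μ • 1) *ᵥ ((H + μ • 1)⁻¹ *ᵥ g) = g := by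
  rw [mulVec_mulVec, mul_nonsing_inv _ ((isUnit_iff_isUnit_det _).mp
    (hH.posDef_add_smul_one_s8 hμ).isUnit), one_mulVec]

theorem mul_norm_le_norm_add_smul_one_mulVec (hH : H.PosSemidef) (μ : ℝ) (y : ι → ℝ) :
    μ * ‖WithLp.toLp 2 y‖ ≤ ‖WithLp.toLp 2 ((H + μ • 1) *ᵥ y)‖ := by
  set Y := WithLp.toLp 2 y
  set Z := WithLp.toLp 2 ((H + μ • 1) *ᵥ y)
  have hquad : μ * ‖Y‖ ^ 2 ≤ inner ℝ Y Z := by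
    have hH_y := hH.dotProduct_mulVec_nonneg y
    rw [← real_inner_self_eq_norm_sq]
    simp only [Y, Z, EuclideanSpace.inner_toLp_toLp, add_mulVec, smul_mulVec, one_mulVec,
      star_trivial, add_dotProduct, smul_dotProduct, smul_eq_mul] at hH_y ⊢
    rw [dotProduct_comm] at hH_y
    linarith
  have hCS : μ * ‖Y‖ ^ 2 ≤ ‖Y‖ * ‖Z‖ := hquad.trans (real_inner_le_norm Y Z)
  rcases (norm_nonneg Y).eq_or_lt with hY | hY
  · simp [← hY]
  · nlinarith

theorem monotoneOn_mul_norm_inv_add_smul_one_mulVec (hH : H.PosSemidef) (g : ι → ℝ) :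
    MonotoneOn (fun μ : ℝ ↦ μ * ‖WithLp.toLp 2 ((H + μ • 1)⁻¹ *ᵥ g)‖) (Set.Ioi 0) := by
  intro μ hμ ν hν hμν
  set v := (H + μ • 1)⁻¹ *ᵥ g
  set w := (H + ν • 1)⁻¹ *ᵥ g
  have hv : (H + μ • 1) *ᵥ v = g := hH.add_smul_one_mulVec_inv_mulVec hμ g
  have hw : (H + ν • 1) *ᵥ w = g := hH.add_smul_one_mulVec_inv_mulVec hν g
  have hdiff : (H + μ • 1) *ᵥ (v - w) = (ν - μ) • w := by
    rw [mulVec_sub, hv, ← hw]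
    simp only [add_mulVec, smul_mulVec, one_mulVec, sub_smul]
    abel
  have hdiff_norm : μ * ‖WithLp.toLp 2 (v - w)‖ ≤ (ν - μ) * ‖WithLp.toLp 2 w‖ := by
    have := hH.mul_norm_le_norm_add_smul_one_mulVec μ (v - w)
    rwa [hdiff, WithLp.toLp_smul, norm_smul, Real.norm_of_nonneg (sub_nonneg.2 hμν)] at this
  have htri : ‖WithLp.toLp 2 v‖ ≤ ‖WithLp.toLp 2 w‖ + ‖WithLp.toLp 2 (v - w)‖ := by
    rw [WithLp.toLp_sub]
    exact norm_le_insert' _ _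
  show μ * ‖WithLp.toLp 2 v‖ ≤ ν * ‖WithLp.toLp 2 w‖
  nlinarith [mul_le_mul_of_nonneg_left htri (le_of_lt hμ)]

end Matrix.PosSemidef

theorem stmt8_general {n : ℕ} (H : Matrix (Fin n) (Fin n) ℝ) (g : Fin n → ℝ) (M μl μu : ℝ)
    (hH : H.PosSemidef) (hM : 0 < M)
    (h0 : 0 < μl) (hlu : μl < μu)
    (hl : μl / ‖(WithLp.equiv 2 (Fin n → ℝ)).symm ((H + μl • 1)⁻¹.mulVec g)‖ = M)
    (hu : μu / ‖(WithLp.equiv 2 (Fin n → ℝ)).symm ((H + μu • 1)⁻¹.mulVec g)‖ = 2 * M) :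
    μu - μl ≥ M / 2 * ‖(WithLp.equiv 2 (Fin n → ℝ)).symm ((H + μu • 1)⁻¹.mulVec g)‖ := by
  simp only [WithLp.equiv_symm_apply] at hl hu ⊢
  set a := ‖WithLp.toLp 2 ((H + μl • 1)⁻¹.mulVec g)‖
  set b := ‖WithLp.toLp 2 ((H + μu • 1)⁻¹.mulVec g)‖
  have hmono : μl * a ≤ μu * b :=
    hH.monotoneOn_mul_norm_inv_add_smul_one_mulVec g h0 (h0.trans hlu) hlu.le
  have ha : a ≠ 0 := by rintro ha; rw [ha, div_zero] at hl; linarith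
  have hb : b ≠ 0 := by rintro hb; rw [hb, div_zero] at hu; linarith
  have hμl : μl = M * a := (div_eq_iff ha).mp hl
  have hμu : μu = 2 * M * b := (div_eq_iff hb).mp hu
  have hab_sq : a ^ 2 ≤ 2 * b ^ 2 := by
    rw [hμl, hμu] at hmono
    nlinarith
  have hab : a ≤ 3 / 2 * b := by nlinarith [(norm_nonneg _ : 0 ≤ a)]
  rw [hμl, hμu]
  nlinarith [mul_le_mul_of_nonneg_left hab hM.le]

/-- For `H ⪰ 0` symmetric, `g ≠ 0`, `g_y(μ) = μ/‖(H+μI)⁻¹g‖`: if `μ_l < μ_u`,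
`g_y(μ_l) = M` and `g_y(μ_u) = 2M` with `M > 0`, then
`μ_u − μ_l ≥ (M/2)‖(H + μ_u I)⁻¹ g‖`. -/
theorem stmt8 {n : ℕ} (H : Matrix (Fin n) (Fin n) ℝ) (g : Fin n → ℝ) (M μl μu : ℝ)
    (hH : H.PosSemidef) (hg : g ≠ 0) (hM : 0 < M)
    (h0 : 0 < μl) (hlu : μl < μu)
    (hl : μl / ‖(WithLp.equiv 2 (Fin n → ℝ)).symm ((H + μl • 1)⁻¹.mulVec g)‖ = M)
    (hu : μu / ‖(WithLp.equiv 2 (Fin n → ℝ)).symm ((H + μu • 1)⁻¹.mulVec g)‖ = 2 * M) :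
    μu - μl ≥ M / 2 * ‖(WithLp.equiv 2 (Fin n → ℝ)).symm ((H + μu • 1)⁻¹.mulVec g)‖ :=
  stmt8_general H g M μl μu hH hM h0 hlu hl hu
end

section
/- Let H be symmetric positive semidefinite, g ∈ ℝⁿ, and define ψ(σ) = (1/σ)‖(H + σI)^{-1}g‖ for σ > 0. Then for 0 < σ ≤ σ̄: (σ/σ̄)² ψ(σ) ≤ ψ(σ̄) ≤ (σ/σ̄) ψ(σ). -/
/-!
Write `u = (H + σ̄I)⁻¹g` and `v = (H + σI)⁻¹g`, so that `(H + σ̄I)u = (H + σI)v`. Pairing this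
identity with `u - v` and using `⟪H(u - v), u - v⟫ ≥ 0` gives
`σ̄‖u‖² + σ‖v‖² ≤ (σ̄ + σ)⟪u, v⟫ ≤ (σ̄ + σ)‖u‖‖v‖`, that is `(σ̄‖u‖ - σ‖v‖)(‖u‖ - ‖v‖) ≤ 0`.
As `0 < σ ≤ σ̄`, `‖u‖ > ‖v‖` would make the first factor positive too; so `‖u‖ ≤ ‖v‖`, and then
the first factor is nonnegative: `σ‖v‖ ≤ σ̄‖u‖`. Up to positive factors, these are the two claims.
-/

open Matrix RealInnerProductSpace

theorem le_and_mul_le_mul_of_mul_sub_mul_mul_sub_nonpos {a b s t : ℝ} (ha : 0 ≤ a) (ht : 0 < t)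
    (hts : t ≤ s) (h : (s * a - t * b) * (a - b) ≤ 0) : a ≤ b ∧ t * b ≤ s * a := by
  have hab : a ≤ b := by
    by_contra! hba
    have hpos : 0 < s * a - t * b := by
      nlinarith [mul_lt_mul_of_pos_left hba ht, mul_le_mul_of_nonneg_right hts ha]
    nlinarith [mul_pos hpos (sub_pos.mpr hba)]
  refine ⟨hab, ?_⟩
  rcases hab.lt_or_eq with hab | rfl
  · nlinarith
  · exact mul_le_mul_of_nonneg_right hts ha

section Resolvent

variable {E : Type*} [NormedAddCommGroup E] [InnerProductSpace ℝ E]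

theorem mul_norm_sub_mul_norm_mul_norm_sub_norm_nonpos {T : E →ₗ[ℝ] E}
    (hT : ∀ x, 0 ≤ ⟪T x, x⟫) {u v : E} {s t : ℝ} (hst : 0 ≤ s + t)
    (h : T u + s • u = T v + t • v) :
    (s * ‖u‖ - t * ‖v‖) * (‖u‖ - ‖v‖) ≤ 0 := by
  have hpair : ⟪T (u - v), u - v⟫ = (s + t) * ⟪u, v⟫ - s * ‖u‖ ^ 2 - t * ‖v‖ ^ 2 := by
    have hTd : T (u - v) = t • v - s • u := by
      rw [map_sub]; linear_combination (norm := module) h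
    rw [hTd]
    simp only [inner_sub_left, inner_sub_right, real_inner_smul_left, real_inner_self_eq_norm_sq,
      real_inner_comm u v]
    ring
  nlinarith [hT (u - v), mul_le_mul_of_nonneg_left (real_inner_le_norm u v) hst]

theorem norm_le_and_mul_norm_le_of_add_smul_eq {T : E →ₗ[ℝ] E}
    (hT : ∀ x, 0 ≤ ⟪T x, x⟫) {u v : E} {s t : ℝ} (ht : 0 < t) (hts : t ≤ s)
    (h : T u + s • u = T v + t • v) :
    ‖u‖ ≤ ‖v‖ ∧ t * ‖v‖ ≤ s * ‖u‖ :=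
  le_and_mul_le_mul_of_mul_sub_mul_mul_sub_nonpos (norm_nonneg u) ht hts
    (mul_norm_sub_mul_norm_mul_norm_sub_norm_nonpos hT (by linarith) h)

end Resolvent

theorem Matrix.PosSemidef.toEuclideanLin_add_smul_inv_add_smul_one {n : Type*} [Fintype n]
    [DecidableEq n] {H : Matrix n n ℝ} (hH : H.PosSemidef) {s : ℝ} (hs : 0 < s) (g : n → ℝ) :
    H.toEuclideanLin (WithLp.toLp 2 ((H + s • 1)⁻¹ *ᵥ g)) + s • WithLp.toLp 2 ((H + s • 1)⁻¹ *ᵥ g)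
      = WithLp.toLp 2 g := by
  have hdet : IsUnit (H + s • 1).det :=
    (isUnit_iff_isUnit_det _).mp (PosDef.posSemidef_add hH (PosDef.one.smul hs)).isUnit
  have hsolve : (H + s • 1) *ᵥ ((H + s • 1)⁻¹ *ᵥ g) = g := by
    rw [mulVec_mulVec, mul_nonsing_inv _ hdet, one_mulVec]
  rw [add_mulVec, smul_mulVec, one_mulVec] at hsolve
  exact congrArg (WithLp.toLp 2) hsolve

/-- For `H ⪰ 0` symmetric and `ψ(σ) = (1/σ)‖(H+σI)⁻¹g‖`, if `0 < σ ≤ σ̄` then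
`(σ/σ̄)² ψ(σ) ≤ ψ(σ̄) ≤ (σ/σ̄) ψ(σ)`. -/
theorem stmt14 {n : ℕ} (H : Matrix (Fin n) (Fin n) ℝ) (g : Fin n → ℝ) (σ σbar : ℝ)
    (hH : H.PosSemidef) (hσ : 0 < σ) (hσσ : σ ≤ σbar) :
    (σ / σbar) ^ 2 * (1 / σ * ‖(WithLp.equiv 2 (Fin n → ℝ)).symm ((H + σ • 1)⁻¹.mulVec g)‖)
        ≤ 1 / σbar * ‖(WithLp.equiv 2 (Fin n → ℝ)).symm ((H + σbar • 1)⁻¹.mulVec g)‖ ∧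
    1 / σbar * ‖(WithLp.equiv 2 (Fin n → ℝ)).symm ((H + σbar • 1)⁻¹.mulVec g)‖
        ≤ σ / σbar * (1 / σ * ‖(WithLp.equiv 2 (Fin n → ℝ)).symm ((H + σ • 1)⁻¹.mulVec g)‖) := by
  have hσbar : 0 < σbar := hσ.trans_le hσσ
  obtain ⟨hnorm, hmul⟩ := norm_le_and_mul_norm_le_of_add_smul_eq
    (isPositive_toEuclideanLin_iff.mpr hH).inner_nonneg_left hσ hσσ
    ((hH.toEuclideanLin_add_smul_inv_add_smul_one hσbar g).trans
      (hH.toEuclideanLin_add_smul_inv_add_smul_one hσ g).symm)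
  simp only [WithLp.equiv_symm_apply]
  set r := ‖WithLp.toLp 2 ((H + σ • 1)⁻¹ *ᵥ g)‖
  set rbar := ‖WithLp.toLp 2 ((H + σbar • 1)⁻¹ *ᵥ g)‖
  constructor
  · calc (σ / σbar) ^ 2 * (1 / σ * r) = σ * r / σbar ^ 2 := by field_simp
      _ ≤ σbar * rbar / σbar ^ 2 := by gcongr
      _ = 1 / σbar * rbar := by field_simp
  · calc 1 / σbar * rbar ≤ 1 / σbar * r := by gcongr
      _ = σ / σbar * (1 / σ * r) := by field_simp
end

section
/- Fix A ≥ 0, and for σ > 0 define a(σ) = (1 + √(1 + 4Aσ))/(2σ) and τ(σ) = a(σ)/(A + a(σ)) = 2/(1 + √(1+4Aσ)). Then |τ'(σ)| ≤ 1/(2σ) for all σ > 0. Consequently, if x, v ∈ ℝⁿ satisfy ‖x − x*‖ ≤ M₀ and ‖v − x*‖ ≤ M₀, then the curve y(σ) = x + τ(σ)(v − x) satisfies ‖y(s) − y(t)‖ ≤ (M₀/t)(s − t) for all s ≥ t > 0. -/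
/-!
With `r = √(1 + 4Aσ)` one has `τ'(σ) = -4A / (r(1 + r)²)` and `4Aσ = r² - 1`, so
`|τ'(σ)| = (r - 1) / (σ r (1 + r)) ≤ 1/(2σ)`. The curve `y` then moves with speed
`|τ'(σ)| ‖v - x‖ ≤ M₀/σ ≤ M₀/t` on `[t, s]`, and the mean value inequality concludes.
-/

open Real

/-- The step size `τ(σ) = a(σ)/(A + a(σ))`, with `a(σ)` the positive root of `σa² = A + a`. -/
noncomputable def tau (A σ : ℝ) : ℝ := 2 / (1 + √(1 + 4 * A * σ))

theorem hasDerivAt_tau {A σ : ℝ} (h : 0 < 1 + 4 * A * σ) :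
    HasDerivAt (tau A) (-(4 * A) / (√(1 + 4 * A * σ) * (1 + √(1 + 4 * A * σ)) ^ 2)) σ := by
  have hlin : HasDerivAt (fun s : ℝ => 1 + 4 * A * s) (4 * A) σ := by
    simpa using ((hasDerivAt_id σ).const_mul (4 * A)).const_add 1
  have hquot : HasDerivAt (tau A) _ σ :=
    (hasDerivAt_const σ (2 : ℝ)).div ((hlin.sqrt h.ne').const_add 1) (by positivity)
  refine hquot.congr_deriv ?_
  field_simp
  ring

theorem abs_deriv_tau_le {A σ : ℝ} (hA : 0 ≤ A) (hσ : 0 < σ) :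
    |deriv (tau A) σ| ≤ 1 / (2 * σ) := by
  have hu : 0 < 1 + 4 * A * σ := by positivity
  rw [(hasDerivAt_tau hu).deriv]
  set r := √(1 + 4 * A * σ)
  have hr2 : r ^ 2 = 1 + 4 * A * σ := sq_sqrt hu.le
  have hr1 : 1 ≤ r := by nlinarith [sqrt_nonneg (1 + 4 * A * σ)]
  rw [abs_div, abs_neg, abs_of_nonneg (by positivity), abs_of_pos (by positivity),
    div_le_div_iff₀ (by positivity) (by positivity)]
  -- `8Aσ = 2(r - 1)(r + 1)` and `2(r - 1) ≤ r(r + 1)`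
  nlinarith [mul_le_mul_of_nonneg_right (by nlinarith : 2 * (r - 1) ≤ r * (1 + r))
    (by positivity : (0 : ℝ) ≤ 1 + r)]

theorem norm_sub_le_of_norm_deriv_le_div {E : Type*} [NormedAddCommGroup E] [NormedSpace ℝ E]
    {f : ℝ → E} {C s t : ℝ} (hf : ∀ σ, 0 < σ → DifferentiableAt ℝ f σ)
    (hbound : ∀ σ, 0 < σ → ‖deriv f σ‖ ≤ C / σ) (ht : 0 < t) (hts : t ≤ s) :
    ‖f s - f t‖ ≤ C / t * (s - t) := by
  have hC : 0 ≤ C := by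
    simpa using (le_div_iff₀ ht).mp ((norm_nonneg _).trans (hbound t ht))
  have hIcc : ∀ σ ∈ Set.Icc t s, 0 < σ := fun σ hσ => ht.trans_le hσ.1
  have hmvt := (convex_Icc t s).norm_image_sub_le_of_norm_deriv_le
    (fun σ hσ => hf σ (hIcc σ hσ))
    (fun σ hσ => (hbound σ (hIcc σ hσ)).trans (div_le_div_of_nonneg_left hC ht hσ.1))
    (Set.left_mem_Icc.mpr hts) (Set.right_mem_Icc.mpr hts)
  rwa [Real.norm_of_nonneg (sub_nonneg.mpr hts)] at hmvt

/-- For `A ≥ 0` and `τ(σ) = 2/(1+√(1+4Aσ))`, one has `|τ'(σ)| ≤ 1/(2σ)` for `σ > 0`;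
consequently, if `‖x−x*‖ ≤ M₀` and `‖v−x*‖ ≤ M₀`, the curve
`y(σ) = x + τ(σ)(v−x)` satisfies `‖y(s)−y(t)‖ ≤ (M₀/t)(s−t)` for all `s ≥ t > 0`. -/
theorem stmt16 {n : ℕ} (A M₀ : ℝ) (hA : 0 ≤ A)
    (x v xstar : EuclideanSpace ℝ (Fin n))
    (hx : ‖x - xstar‖ ≤ M₀) (hv : ‖v - xstar‖ ≤ M₀) :
    (∀ σ : ℝ, 0 < σ →
      |deriv (fun s : ℝ => 2 / (1 + Real.sqrt (1 + 4 * A * s))) σ| ≤ 1 / (2 * σ)) ∧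
    (∀ s t : ℝ, 0 < t → t ≤ s →
      ‖(x + (2 / (1 + Real.sqrt (1 + 4 * A * s))) • (v - x))
          - (x + (2 / (1 + Real.sqrt (1 + 4 * A * t))) • (v - x))‖
        ≤ M₀ / t * (s - t)) := by
  refine ⟨fun σ hσ => abs_deriv_tau_le hA hσ, fun s t ht hts => ?_⟩
  have hvx : ‖v - x‖ ≤ 2 * M₀ := by
    have := dist_triangle_right v x xstar
    rw [dist_eq_norm, dist_eq_norm, dist_eq_norm] at this
    linarith
  have hcurve : ∀ σ, 0 < σ →
      HasDerivAt (fun σ => x + tau A σ • (v - x)) (deriv (tau A) σ • (v - x)) σ :=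
    fun σ hσ => ((hasDerivAt_tau (by positivity)).differentiableAt.hasDerivAt.smul_const
      (v - x)).const_add x
  refine norm_sub_le_of_norm_deriv_le_div (fun σ hσ => (hcurve σ hσ).differentiableAt)
    (fun σ hσ => ?_) ht hts
  rw [(hcurve σ hσ).deriv, norm_smul, Real.norm_eq_abs]
  calc |deriv (tau A) σ| * ‖v - x‖ ≤ 1 / (2 * σ) * (2 * M₀) :=
        mul_le_mul (abs_deriv_tau_le hA hσ) hvx (norm_nonneg _) (by positivity)
    _ = M₀ / σ := by field_simp
end

section
/- Let {A_k} be a positive increasing sequence and {σ_k} positive numbers satisfying A_{k+1} = A_k + a_k with σ_k a_k² = A_{k+1}. Then √(A_{k+1}) ≥ √(A_k) + 1/(2√(σ_k)) for all k ≥ 0, and hence A_k ≥ (1/4)(Σ_{i=0}^{k−1} σ_i^{−1/2})². -/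
open Real

/-- For the accumulation sequence with `A_{k+1} = A_k + a_k` and `σ_k a_k² = A_{k+1}`:
`√A_{k+1} ≥ √A_k + 1/(2√σ_k)` and hence `A_k ≥ (1/4)(∑_{i<k} σ_i^{-1/2})²`. -/
theorem stmt17 (A a σ : ℕ → ℝ)
    (hA0 : 0 ≤ A 0) (ha : ∀ k, 0 < a k) (hσ : ∀ k, 0 < σ k)
    (hsum : ∀ k, A (k + 1) = A k + a k)
    (hrel : ∀ k, σ k * a k ^ 2 = A (k + 1)) :
    (∀ k : ℕ, Real.sqrt (A (k + 1)) ≥ Real.sqrt (A k) + 1 / (2 * Real.sqrt (σ k))) ∧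
    (∀ k : ℕ, A k ≥ 1 / 4 * (∑ i ∈ Finset.range k, 1 / Real.sqrt (σ i)) ^ 2) := by
  have hAnn : ∀ k, 0 ≤ A k := by
    intro k
    cases k with
    | zero => exact hA0
    | succ n => rw [hsum n]; exact add_nonneg (by cases n with
        | zero => exact hA0
        | succ m => exact le_of_lt (by
            have : A (m+1) = σ m * a m ^ 2 := (hrel m).symm
            rw [this]; exact mul_pos (hσ m) (pow_pos (ha m) 2))) (le_of_lt (ha n))
  have hApos : ∀ k, 0 < A (k + 1) := by
    intro k
    rw [← hrel k]; exact mul_pos (hσ k) (pow_pos (ha k) 2)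
  have part1 : ∀ k : ℕ, Real.sqrt (A (k + 1)) ≥ Real.sqrt (A k) + 1 / (2 * Real.sqrt (σ k)) := by
    intro k
    set s := Real.sqrt (A (k+1)) with hs
    set t := Real.sqrt (A k) with ht
    set c := 1 / Real.sqrt (σ k) with hc
    have hσs : 0 < Real.sqrt (σ k) := Real.sqrt_pos.mpr (hσ k)
    have hcpos : 0 < c := by positivity
    have hspos : 0 < s := Real.sqrt_pos.mpr (hApos k)
    have htnn : 0 ≤ t := Real.sqrt_nonneg _
    have hs2 : s ^ 2 = A (k+1) := Real.sq_sqrt (hApos k).le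
    have ht2 : t ^ 2 = A k := Real.sq_sqrt (hAnn k)
    -- a k = s * c
    have hak : a k = s * c := by
      have h1 : a k = Real.sqrt (a k ^ 2) := by
        rw [Real.sqrt_sq (ha k).le]
      have h2 : a k ^ 2 = A (k+1) / σ k := by
        field_simp [(hσ k).ne']
        linarith [hrel k]
      rw [h1, h2, Real.sqrt_div (hAnn (k+1)), hc, ← hs]
      field_simp
    have key : s ^ 2 = t ^ 2 + s * c := by
      rw [hs2, ht2, hsum k, hak]
    have hsc : c ≤ s := by
      nlinarith [sq_nonneg t]
    have hst : t < s := by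
      nlinarith
    have goal : s ≥ t + c / 2 := by
      nlinarith [mul_pos (sub_pos.mpr hst) (add_pos_of_pos_of_nonneg hspos htnn)]
    calc s ≥ t + c / 2 := goal
      _ = t + 1 / (2 * Real.sqrt (σ k)) := by rw [hc]; ring
  refine ⟨part1, ?_⟩
  have aux : ∀ k : ℕ, Real.sqrt (A k) ≥ 1 / 2 * ∑ i ∈ Finset.range k, 1 / Real.sqrt (σ i) := by
    intro k
    induction k with
    | zero => simp [Real.sqrt_nonneg]
    | succ n ih =>
      rw [Finset.sum_range_succ]
      have := part1 n
      have h2 : 1 / (2 * Real.sqrt (σ n)) = 1 / 2 * (1 / Real.sqrt (σ n)) := by ring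
      nlinarith [this]
  intro k
  have h := aux k
  have hsnn : 0 ≤ ∑ i ∈ Finset.range k, 1 / Real.sqrt (σ i) :=
    Finset.sum_nonneg fun i _ => by positivity
  have := Real.sq_sqrt (hAnn k)
  nlinarith [h, sq_nonneg (Real.sqrt (A k))]
end

section
/- Let ω > 0 and let {C_k} be a positive sequence with C₁ ≥ ω^{1/7} and C_{k+1}^{3/2} − C_k^{3/2} ≥ ω^{1/7} C_{k+1}^{1/2} for all k ≥ 1. Then C_k ≥ ω^{1/7}(1 + (2/3)(k−1)) = ω^{1/7}(2k+1)/3 for all k ≥ 1. -/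
open Real

lemma key_step19 (a x y : ℝ) (ha : 0 < a) (hx : 0 < x) (hy : 0 < y)
    (h : x ^ ((3 : ℝ) / 2) - y ^ ((3 : ℝ) / 2) ≥ a * x ^ ((1 : ℝ) / 2)) :
    x ≥ y + 2 * a / 3 := by
  set u := x ^ ((1 : ℝ) / 2) with hu_def
  set v := y ^ ((1 : ℝ) / 2) with hv_def
  have hu : 0 < u := Real.rpow_pos_of_pos hx _
  have hv : 0 < v := Real.rpow_pos_of_pos hy _
  have hux : u ^ 2 = x := by
    rw [hu_def, ← Real.rpow_natCast (x ^ ((1:ℝ)/2)) 2, ← Real.rpow_mul hx.le]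
    norm_num
  have hvy : v ^ 2 = y := by
    rw [hv_def, ← Real.rpow_natCast (y ^ ((1:ℝ)/2)) 2, ← Real.rpow_mul hy.le]
    norm_num
  have hx3 : x ^ ((3 : ℝ) / 2) = u ^ 3 := by
    rw [hu_def, ← Real.rpow_natCast (x ^ ((1:ℝ)/2)) 3, ← Real.rpow_mul hx.le]
    norm_num
  have hy3 : y ^ ((3 : ℝ) / 2) = v ^ 3 := by
    rw [hv_def, ← Real.rpow_natCast (y ^ ((1:ℝ)/2)) 3, ← Real.rpow_mul hy.le]
    norm_num
  rw [hx3, hy3] at h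
  have huv : v ≤ u := by nlinarith [sq_nonneg (u - v), sq_nonneg (u + v)]
  nlinarith [mul_pos hu hv, sq_nonneg (u - v), mul_nonneg (sub_nonneg.mpr huv) hv.le,
    mul_nonneg (mul_nonneg (sub_nonneg.mpr huv) hv.le) hv.le]

/-- If `C₁ ≥ ω^{1/7}` and `C_{k+1}^{3/2} − C_k^{3/2} ≥ ω^{1/7} C_{k+1}^{1/2}` for `k ≥ 1`,
then `C_k ≥ ω^{1/7}(2k+1)/3` for all `k ≥ 1`. -/
theorem stmt19 (ω : ℝ) (hω : 0 < ω) (C : ℕ → ℝ)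
    (hpos : ∀ k : ℕ, 1 ≤ k → 0 < C k)
    (h1 : C 1 ≥ ω ^ ((1 : ℝ) / 7))
    (hrec : ∀ k : ℕ, 1 ≤ k →
      C (k + 1) ^ ((3 : ℝ) / 2) - C k ^ ((3 : ℝ) / 2) ≥
        ω ^ ((1 : ℝ) / 7) * C (k + 1) ^ ((1 : ℝ) / 2)) :
    ∀ k : ℕ, 1 ≤ k → C k ≥ ω ^ ((1 : ℝ) / 7) * (2 * (k : ℝ) + 1) / 3 := by
  have ha : 0 < ω ^ ((1 : ℝ) / 7) := Real.rpow_pos_of_pos hω _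
  intro k hk
  induction k, hk using Nat.le_induction with
  | base => simpa using by linarith [h1]
  | succ n hn ih =>
    have hstep := key_step19 _ _ _ ha (hpos (n + 1) (by omega)) (hpos n hn) (hrec n hn)
    push_cast
    push_cast at ih
    linarith
end
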